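/- The class Wide of all widened inclusions is contained in the saturated closure of the class Wide^(1) of inclusions widened at a single vertex. -/

import Mathlib

open CategoryTheory Simplicial Opposite Limits

namespace Paper

/-! ## The simplicial set `J`, nerve of the free-living isomorphism -/

/-- The simplicial set `J`, the nerve of the free-living isomorphism `𝕀`:
its `n`-simplices are the tuples `{0,1}^(n+1)` (recorded as `Bool`-valued functions,
`false` being the vertex `0` and `true` the vertex `1`), with all simplicial
operators acting by reindexing. -/
def J : SSet.{0} where
  obj m := Fin (m.unop.len + 1) → Bool
  map f := TypeCat.ofHom fun a => a ∘ f.unop.toOrderHom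
  map_id _ := rfl
  map_comp _ _ := rfl

/-- The two vertices `0, 1 : Δ[0] ⟶ J` of `J`; `ptJ false` is the vertex `0` and
`ptJ true` is the vertex `1`. -/
def ptJ (b : Bool) : Δ[0] ⟶ J where
  app _ := TypeCat.ofHom fun _ => fun _ => b
  naturality _ _ _ := rfl

/-- The boundary `∂J = {0} ∪ {1}` of `J` (two discrete points). -/
def bJ : SSet.{0} where
  obj _ := Bool
  map _ := TypeCat.ofHom fun b => b
  map_id _ := rfl
  map_comp _ _ := rfl

/-- The inclusion `∂J ↪ J`. -/
def bJIncl : bJ ⟶ J where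
  app _ := TypeCat.ofHom fun b => fun _ => b
  naturality _ _ _ := rfl

/-! ## Binary products and pushout-products -/

/-- The (pointwise) product of two simplicial sets. -/
def sprod (X Y : SSet.{0}) : SSet.{0} where
  obj m := X.obj m × Y.obj m
  map f := TypeCat.ofHom fun p => (X.map f p.1, Y.map f p.2)
  map_id m := by
    ext p
    · exact FunctorToTypes.map_id_apply X p.1
    · exact FunctorToTypes.map_id_apply Y p.2
  map_comp f g := by
    ext p
    · exact FunctorToTypes.map_comp_apply X f g p.1
    · exact FunctorToTypes.map_comp_apply Y f g p.2

/-- The product of two morphisms of simplicial sets. -/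
def sprodMap {X X' Y Y' : SSet.{0}} (f : X ⟶ X') (g : Y ⟶ Y') : sprod X Y ⟶ sprod X' Y' where
  app m := TypeCat.ofHom fun p => (f.app m (Prod.fst p), g.app m (Prod.snd p))
  naturality m m' φ := by
    ext p
    have h1 := ConcreteCategory.congr_hom (f.naturality φ) (Prod.fst (p : X.obj m × Y.obj m))
    have h2 := ConcreteCategory.congr_hom (g.naturality φ) (Prod.snd (p : X.obj m × Y.obj m))
    exact Prod.ext h1 h2

/-- The pushout-product `f □ g : (A × Z) ∪ (B × W) ⟶ B × Z` of `f : A ⟶ B` and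
`g : W ⟶ Z`, the domain being presented as the pushout `(A × Z) ∪_{A × W} (B × W)`. -/
noncomputable def pp {A B W Z : SSet.{0}} (f : A ⟶ B) (g : W ⟶ Z) :
    pushout (sprodMap (𝟙 A) g) (sprodMap f (𝟙 W)) ⟶ sprod B Z :=
  pushout.desc (sprodMap f (𝟙 Z)) (sprodMap (𝟙 B) g) rfl

/-! ## Saturated classes of morphisms -/

/-- A class of morphisms is stable under retracts if, whenever `f` is a retract of `g`
in the arrow category, membership of `g` implies membership of `f`. -/
def StableUnderRetracts (T : MorphismProperty SSet.{0}) : Prop :=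
  ∀ ⦃X Y X' Y' : SSet.{0}⦄ (f : X ⟶ Y) (g : X' ⟶ Y')
    (i : Arrow.mk f ⟶ Arrow.mk g) (r : Arrow.mk g ⟶ Arrow.mk f),
    i ≫ r = 𝟙 _ → T g → T f

/-- The inclusion functor `Set.Iio i ⥤ ι`. -/
def iioFunctor {ι : Type} [Preorder ι] (i : ι) : Set.Iio i ⥤ ι :=
  Monotone.functor (f := Subtype.val) (fun _ _ h => h)

/-- The cocone on the restriction of `F : ι ⥤ SSet` to `Set.Iio i` with apex `F.obj i`. -/
def restrictionCocone {ι : Type} [Preorder ι] (F : ι ⥤ SSet.{0}) (i : ι) :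
    Cocone (iioFunctor i ⋙ F) where
  pt := F.obj i
  ι :=
    { app := fun j => F.map (homOfLE j.2.le)
      naturality := fun j k h => by
        dsimp [iioFunctor]
        rw [← F.map_comp, Category.comp_id]
        congr 1 }

/-- A class of morphisms is stable under transfinite composition if, for every
well-ordered type `ι` and every functor `F : ι ⥤ SSet` which is continuous at limit
stages and whose successor maps `F.obj i ⟶ F.obj (i+1)` all belong to the class, and
every colimit cocone `c` on `F`, the transfinite composite `F.obj ⊥ ⟶ c.pt` belongs to
the class. -/
def StableUnderTransfiniteComposition (T : MorphismProperty SSet.{0}) : Prop :=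
  ∀ (ι : Type) [LinearOrder ι] [SuccOrder ι] [OrderBot ι] [WellFoundedLT ι]
    (F : ι ⥤ SSet.{0}),
    (∀ i : ι, ¬IsMax i → T (F.map (homOfLE (Order.le_succ i)))) →
    (∀ i : ι, Order.IsSuccLimit i → Nonempty (IsColimit (restrictionCocone F i))) →
    ∀ (c : Cocone F), IsColimit c → T (c.ι.app ⊥)

/-- A class of morphisms of simplicial sets is saturated if it is closed under
isomorphisms, pushouts, transfinite compositions, and retracts. -/
structure IsSaturated (T : MorphismProperty SSet.{0}) : Prop where
  respectsIso : T.RespectsIso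
  stableUnderCobaseChange : T.IsStableUnderCobaseChange
  stableUnderRetracts : StableUnderRetracts T
  stableUnderTransfiniteComposition : StableUnderTransfiniteComposition T

/-- The saturated closure of a class of morphisms: the smallest saturated class
containing it. -/
def satClosure (S : MorphismProperty SSet.{0}) : MorphismProperty SSet.{0} :=
  fun _ _ f => ∀ T : MorphismProperty SSet.{0}, IsSaturated T → S ≤ T → T f

/-! ## Subcomplexes -/

/-- A subcomplex of a simplicial set. -/
structure Sub (X : SSet.{0}) where
  carrier : ∀ m, Set (X.obj m)
  map_mem : ∀ ⦃m m' : SimplexCategoryᵒᵖ⦄ (f : m ⟶ m') ⦃σ : X.obj m⦄,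
    σ ∈ carrier m → X.map f σ ∈ carrier m'

/-- The simplicial set underlying a subcomplex. -/
def Sub.toSSet {X : SSet.{0}} (S : Sub X) : SSet.{0} where
  obj m := S.carrier m
  map f := TypeCat.ofHom fun σ => ⟨X.map f σ.1, S.map_mem f σ.2⟩
  map_id m := by
    ext σ
    exact FunctorToTypes.map_id_apply X σ.1
  map_comp f g := by
    ext σ
    exact FunctorToTypes.map_comp_apply X f g σ.1

/-- The inclusion of a subcomplex. -/
def Sub.ι {X : SSet.{0}} (S : Sub X) : S.toSSet ⟶ X where
  app _ := TypeCat.ofHom fun σ => Subtype.val σ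
  naturality _ _ _ := rfl

/-- Containment of subcomplexes. -/
def Sub.Le {X : SSet.{0}} (S T : Sub X) : Prop := ∀ m, S.carrier m ⊆ T.carrier m

/-- The inclusion map associated to a containment of subcomplexes. -/
def Sub.homOfLe {X : SSet.{0}} {S T : Sub X} (h : S.Le T) : S.toSSet ⟶ T.toSSet where
  app m := TypeCat.ofHom fun σ => Subtype.mk (Subtype.val σ) (h m (Subtype.property σ))
  naturality _ _ _ := rfl

/-- The union of two subcomplexes. -/
def Sub.union {X : SSet.{0}} (S T : Sub X) : Sub X where
  carrier m := S.carrier m ∪ T.carrier m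
  map_mem _ _ f _ h := h.imp (fun hs => S.map_mem f hs) (fun ht => T.map_mem f ht)

/-- The intersection of two subcomplexes. -/
def Sub.inter {X : SSet.{0}} (S T : Sub X) : Sub X where
  carrier m := S.carrier m ∩ T.carrier m
  map_mem _ _ f _ h := ⟨S.map_mem f h.1, T.map_mem f h.2⟩

/-- A subcomplex `S` of `X`, viewed as a subcomplex of (the simplicial set underlying)
another subcomplex `T` of `X`. -/
def Sub.restrict {X : SSet.{0}} (T S : Sub X) : Sub T.toSSet where
  carrier m := {σ | Subtype.val σ ∈ S.carrier m}
  map_mem _ _ f _ h := S.map_mem f h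

/-- The (dimension zero) object of `SimplexCategoryᵒᵖ` indexing vertices. -/
abbrev V0 : SimplexCategoryᵒᵖ := Opposite.op (SimplexCategory.mk 0)

/-- The full subcomplex of `X` on a set `ν` of vertices: the simplices all of whose
vertices lie in `ν`. -/
def fullSub (X : SSet.{0}) (ν : Set (X.obj V0)) : Sub X where
  carrier m := {σ | ∀ g : SimplexCategory.mk 0 ⟶ m.unop, X.map g.op σ ∈ ν}
  map_mem := by
    intro m m' f σ hσ g
    rw [← FunctorToTypes.map_comp_apply]
    exact hσ (g ≫ f.unop)

/-! ## Widenings and widened inclusions -/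

/-- The widening `W_ν(X)` of `X` at a set `ν` of vertices: the full subcomplex of
`J × X` on the vertex set `({0} × X₀) ∪ ({1} × ν)`. -/
def wideSub (X : SSet.{0}) (ν : Set (X.obj V0)) : Sub (sprod J X) :=
  fullSub (sprod J X) {p | (Prod.fst p) 0 = true → Prod.snd p ∈ ν}

/-- The subcomplex `{0} × X` of `J × X` (the full subcomplex on the vertices
`{0} × X₀`). -/
def zeroSlice (X : SSet.{0}) : Sub (sprod J X) :=
  fullSub (sprod J X) {p | (Prod.fst p) 0 = false}

/-- For `A` a subcomplex of `Y`, the subcomplex `J × A` of `J × Y`. -/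
def Sub.prodJ {Y : SSet.{0}} (A : Sub Y) : Sub (sprod J Y) where
  carrier m := {p | Prod.snd p ∈ A.carrier m}
  map_mem _ _ f _ h := A.map_mem f h

/-- Given a subcomplex (inclusion) `A = X ⊆ Y` and a set `ν` of vertices of `Y`, the
subcomplex `({0} × Y) ∪ W_{ν ∩ X₀}(X)` of `J × Y`: the domain of the inclusion
`X ↪ Y` widened at `ν`. -/
def widenedSub (Y : SSet.{0}) (A : Sub Y) (ν : Set (Y.obj V0)) : Sub (sprod J Y) :=
  (zeroSlice Y).union ((wideSub Y (ν ∩ A.carrier V0)).inter A.prodJ)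

lemma zeroSlice_le_wideSub (Y : SSet.{0}) (ν : Set (Y.obj V0)) :
    (zeroSlice Y).Le (wideSub Y ν) := by
  intro m σ hσ g h
  exact absurd (hσ g) (by simp [h])

lemma wideSub_mono (Y : SSet.{0}) {ν ν' : Set (Y.obj V0)} (h : ν ⊆ ν') :
    (wideSub Y ν).Le (wideSub Y ν') :=
  fun _ σ hσ g ht => h (hσ g ht)

lemma widenedSub_le (Y : SSet.{0}) (A : Sub Y) (ν : Set (Y.obj V0)) :
    (widenedSub Y A ν).Le (wideSub Y ν) := by
  refine fun m σ hσ => Or.elim hσ (fun h => ?_) (fun h => ?_)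
  · exact zeroSlice_le_wideSub Y ν m h
  · exact wideSub_mono Y Set.inter_subset_left m h.1

/-- The inclusion `X ↪ Y` widened at `ν`: the inclusion
`({0} × Y) ∪ W_{ν ∩ X₀}(X) ↪ W_ν(Y)`. -/
def widenedIncl (Y : SSet.{0}) (A : Sub Y) (ν : Set (Y.obj V0)) :
    (widenedSub Y A ν).toSSet ⟶ (wideSub Y ν).toSSet :=
  Sub.homOfLe (widenedSub_le Y A ν)

/-- `Wide`: the class of all widened inclusions. -/
def Wide : MorphismProperty SSet.{0} := fun _ _ h =>
  ∃ (Y : SSet.{0}) (A : Sub Y) (ν : Set (Y.obj V0)),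
    Arrow.mk h = Arrow.mk (widenedIncl Y A ν)

/-- `Wide^(1)`: the class of inclusions widened at a single vertex. -/
def Wide1 : MorphismProperty SSet.{0} := fun _ _ h =>
  ∃ (Y : SSet.{0}) (A : Sub Y) (v : Y.obj V0),
    Arrow.mk h = Arrow.mk (widenedIncl Y A {v})

/-! ## Narrow vertices -/

/-- A vertex `v` of `Y` is narrow if every simplex of `Y` has at most one vertex equal
to `v`. -/
def Narrow (Y : SSet.{0}) (v : Y.obj V0) : Prop :=
  ∀ ⦃m : SimplexCategoryᵒᵖ⦄ (σ : Y.obj m) (g g' : SimplexCategory.mk 0 ⟶ m.unop),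
    Y.map g.op σ = v → Y.map g'.op σ = v → g = g'

/-- `Wide_nar`: the class of inclusions widened at a narrow set of vertices. -/
def WideNar : MorphismProperty SSet.{0} := fun _ _ h =>
  ∃ (Y : SSet.{0}) (A : Sub Y) (ν : Set (Y.obj V0)),
    (∀ v ∈ ν, Narrow Y v) ∧ Arrow.mk h = Arrow.mk (widenedIncl Y A ν)

/-- `Wide_nar^(1)`: the class of inclusions widened at a single narrow vertex. -/
def WideNar1 : MorphismProperty SSet.{0} := fun _ _ h =>
  ∃ (Y : SSet.{0}) (A : Sub Y) (v : Y.obj V0),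
    Narrow Y v ∧ Arrow.mk h = Arrow.mk (widenedIncl Y A {v})

/-! ## Standard simplices, boundaries, skeleta, iso-horns -/

/-- The unique map to the terminal simplicial set `Δ[0]`. -/
def toPt (X : SSet.{0}) : X ⟶ Δ[0] where
  app m := TypeCat.ofHom fun _ => SSet.stdSimplex.const 0 0 m
  naturality m m' f := by
    ext x
    apply SSet.stdSimplex.objEquiv.injective
    apply SimplexCategory.Hom.ext
    apply OrderHom.ext
    funext j
    exact Subsingleton.elim (α := Fin 1) _ _

/-- The `i`-th vertex of the standard simplex `Δ[n]`. -/
def vrt (n : ℕ) (i : Fin (n + 1)) : Δ[n].obj V0 :=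
  SSet.stdSimplex.const n i V0

/-- The boundary `∂Δ[n]`, as a subcomplex of `Δ[n]`: the simplices which are not
surjective as monotone maps. -/
def bSub (n : ℕ) : Sub Δ[n] where
  carrier m := {σ | ¬Function.Surjective (SSet.stdSimplex.asOrderHom σ)}
  map_mem _ _ f σ hσ h := hσ (Function.Surjective.of_comp h)

/-- The `k`-skeleton of `Y`, as a subcomplex: the simplices which factor through some
simplex of dimension at most `k`. -/
def skSub (Y : SSet.{0}) (k : ℕ) : Sub Y where
  carrier m := {σ | ∃ (j : ℕ) (_ : j ≤ k) (f : m.unop ⟶ SimplexCategory.mk j)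
    (τ : Y.obj (Opposite.op (SimplexCategory.mk j))), Y.map f.op τ = σ}
  map_mem := by
    rintro m m' φ σ ⟨j, hj, f, τ, rfl⟩
    exact ⟨j, hj, φ.unop ≫ f, τ, by rw [← FunctorToTypes.map_comp_apply]; rfl⟩

/-- A `k`-simplex is nondegenerate if it admits no factorization through a simplex of
strictly smaller dimension. -/
def Nondegenerate (Y : SSet.{0}) {k : ℕ} (σ : Y.obj (Opposite.op (SimplexCategory.mk k))) :
    Prop :=
  ∀ (j : ℕ) (f : SimplexCategory.mk k ⟶ SimplexCategory.mk j)
    (τ : Y.obj (Opposite.op (SimplexCategory.mk j))), Y.map f.op τ = σ → k ≤ j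

/-- The iso-horn inclusion `𝕍_i[m+1] ↪ ∇̄_i[m+1]`: the boundary inclusion
`∂Δ[m] ↪ Δ[m]` widened at the single vertex `i`, i.e. the inclusion
`({0} × Δ[m]) ∪ W_i(∂Δ[m]) ↪ W_i(Δ[m])` of the iso-horn into the isoplex. -/
def isoHornIncl (m : ℕ) (i : Fin (m + 1)) :
    (widenedSub Δ[m] (bSub m) {vrt m i}).toSSet ⟶ (wideSub Δ[m] {vrt m i}).toSSet :=
  widenedIncl Δ[m] (bSub m) {vrt m i}

/-- `IsoHorn`: the class of all iso-horn inclusions. -/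
def IsoHorn : MorphismProperty SSet.{0} := fun _ _ h =>
  ∃ (m : ℕ) (i : Fin (m + 1)), Arrow.mk h = Arrow.mk (isoHornIncl m i)

/-! ## The classes `({0} ↪ J) □ Bdry` and `({0} ↪ J) □ Mono` -/

/-- The class `({0} ↪ J) □ Bdry` of pushout-products of the vertex `0 : Δ[0] ⟶ J`
with the boundary inclusions `∂Δ[n] ↪ Δ[n]`. -/
def ppJ0Bdry : MorphismProperty SSet.{0} := fun _ _ h =>
  ∃ n : ℕ, Arrow.mk h = Arrow.mk (pp (ptJ false) (SSet.boundary n).ι)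

/-- The class `({0} ↪ J) □ Mono` of pushout-products of the vertex `0 : Δ[0] ⟶ J`
with all monomorphisms of simplicial sets. -/
def ppJ0Mono : MorphismProperty SSet.{0} := fun _ _ h =>
  ∃ (W Z : SSet.{0}) (g : W ⟶ Z), Mono g ∧ Arrow.mk h = Arrow.mk (pp (ptJ false) g)

/-
Well-order `ν` and widen at one vertex at a time. For `μ ⊆ ν` let
`X_μ = ({0} × Y) ∪ W_{ν ∩ A₀}(A) ∪ W_μ(Y) ⊆ J × Y`; as `μ` runs through the initial segments of `ν`
these form a continuous filtration from the domain of the widened inclusion (`μ = ∅`) to `W_ν(Y)`.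
For `v ∉ μ`, the inclusion `X_μ ↪ X_{μ ∪ {v}}` is the pushout of `X_μ ∩ (J × A) ↪ X_μ` widened at
the vertex `(0, v)`, along `J × X_μ → J × Y`, `(b, (a, y)) ↦ (b ∨ a, y)`: a simplex `(c, y)` of
`X_{μ ∪ {v}}` outside `X_μ` has exactly one preimage, obtained by splitting `c` into its part over
`v` (giving `b`) and the rest (giving `a`).
-/

universe u

lemma isPushout_of_app_injective {C : Type*} [Category C] {F₁ F₂ F₃ F₄ : C ⥤ Type u}
    {t : F₁ ⟶ F₂} {l : F₁ ⟶ F₃} {r : F₂ ⟶ F₄} {b : F₃ ⟶ F₄} (w : t ≫ r = l ≫ b)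
    (hr : ∀ c, Function.Injective (r.app c)) (hl : ∀ c, Function.Injective (l.app c))
    (hpre : ∀ c x₃, b.app c x₃ ∈ Set.range (r.app c) → x₃ ∈ Set.range (l.app c))
    (hsurj : ∀ c x₄, x₄ ∉ Set.range (r.app c) → x₄ ∈ Set.range (b.app c))
    (hinj : ∀ c, Set.InjOn (b.app c) (Set.range (l.app c))ᶜ) :
    IsPushout t l r b :=
  IsPushout.of_forall_isPushout_app fun c => by
    have wc := congr_app w c
    have : Mono (r.app c) := (mono_iff_injective _).2 (hr c)
    refine Types.isPushout_of_isPullback_of_mono' ?_ ?_ fun x y hx hy => hinj c hx hy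
    · refine (Types.isPullback_iff _ _ _ _).2 ⟨by simpa using wc, fun x y h => hl c h.2, ?_⟩
      intro x₂ x₃ h
      obtain ⟨x₁, rfl⟩ := hpre c x₃ ⟨x₂, h⟩
      refine ⟨x₁, hr c ?_, rfl⟩
      rw [h]
      exact ConcreteCategory.congr_hom wc x₁
    · ext x₄
      simpa using (em (x₄ ∈ Set.range (r.app c))).imp_right (hsurj c x₄)

namespace Sub

variable {Z : SSet.{0}}

lemma Le.refl (S : Sub Z) : S.Le S := fun _ _ h => h

lemma homOfLe_app_injective {S S' : Sub Z} (h : S.Le S') (m : SimplexCategoryᵒᵖ) :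
    Function.Injective ((homOfLe h).app m) :=
  fun _ _ e => Subtype.ext (congrArg Subtype.val e :)

lemma isIso_homOfLe {S S' : Sub Z} (h : S.Le S') (h' : S'.Le S) : IsIso (homOfLe h) :=
  ⟨homOfLe h', rfl, rfl⟩

def diagram {K : Type} [Preorder K] (X : K → Sub Z) (hX : ∀ ⦃i j⦄, i ≤ j → (X i).Le (X j)) :
    K ⥤ SSet.{0} where
  obj i := (X i).toSSet
  map f := homOfLe (hX (leOfHom f))

def cocone {K : Type} [Preorder K] (X : K → Sub Z) (hX : ∀ ⦃i j⦄, i ≤ j → (X i).Le (X j))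
    (S : Sub Z) (hS : ∀ i, (X i).Le S) : Cocone (diagram X hX) where
  pt := S.toSSet
  ι := { app i := homOfLe (hS i) }

noncomputable def isColimitCocone {K : Type} [Preorder K] [IsDirectedOrder K] (X : K → Sub Z)
    (hX : ∀ ⦃i j⦄, i ≤ j → (X i).Le (X j)) (S : Sub Z) (hS : ∀ i, (X i).Le S)
    (hcover : ∀ m, ∀ σ ∈ S.carrier m, ∃ i, σ ∈ (X i).carrier m) :
    IsColimit (cocone X hX S hS) :=
  evaluationJointlyReflectsColimits _ fun m =>
    Types.FilteredColimit.isColimitOf _ _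
      (fun σ => by
        obtain ⟨i, hi⟩ := hcover m σ.1 σ.2
        exact ⟨i, ⟨σ.1, hi⟩, rfl⟩)
      (fun i j σ τ h => by
        obtain ⟨k, hik, hjk⟩ := directed_of (· ≤ ·) i j
        exact ⟨k, homOfLE hik, homOfLE hjk, Subtype.ext (congrArg Subtype.val h :)⟩)

end Sub


section Saturated

variable {T : MorphismProperty SSet.{0}}

theorem IsSaturated.homOfLe_bot_mem (hT : IsSaturated T) {ι : Type} [LinearOrder ι] [SuccOrder ι]
    [OrderBot ι] [WellFoundedLT ι] {Z : SSet.{0}} (X : ι → Sub Z)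
    (hX : ∀ ⦃i j⦄, i ≤ j → (X i).Le (X j))
    (hstep : ∀ i, ¬IsMax i → T (Sub.homOfLe (hX (Order.le_succ i))))
    (hlim : ∀ i, Order.IsSuccLimit i → ∀ m, ∀ σ ∈ (X i).carrier m, ∃ j < i, σ ∈ (X j).carrier m)
    {S : Sub Z} (hS : ∀ i, (X i).Le S)
    (hcover : ∀ m, ∀ σ ∈ S.carrier m, ∃ i, σ ∈ (X i).carrier m) :
    T (Sub.homOfLe (hS ⊥)) :=
  hT.stableUnderTransfiniteComposition ι (Sub.diagram X hX) hstep
    (fun i hi => ⟨Sub.isColimitCocone (fun j : Set.Iio i => X j) (fun _ _ h => hX h) (X i)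
      (fun j => hX j.2.le) fun m σ hσ =>
        let ⟨j, hj, hσj⟩ := hlim i hi m σ hσ
        ⟨⟨j, hj⟩, hσj⟩⟩)
    _ (Sub.isColimitCocone X hX S hS hcover)

/-- A transfinite composition indexed by `Fin 1`: no steps, and the bottom is already the union. -/
theorem IsSaturated.homOfLe_mem_of_le (hT : IsSaturated T) {Z : SSet.{0}} {S S' : Sub Z}
    (h : S.Le S') (h' : S'.Le S) : T (Sub.homOfLe h) :=
  hT.homOfLe_bot_mem (ι := Fin 1) (fun _ => S) (fun _ _ _ => Sub.Le.refl S)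
    (fun _ hi => (hi fun _ _ => (Subsingleton.elim _ _).le).elim)
    (fun _ hi => (hi.not_isMin fun _ _ => (Subsingleton.elim _ _).le).elim)
    (fun _ => h) fun m _ hσ => ⟨0, h' m hσ⟩

end Saturated

abbrev vertex {X : SSet.{0}} {m : SimplexCategoryᵒᵖ} (σ : X.obj m) (k : Fin (m.unop.len + 1)) :
    X.obj V0 :=
  X.map (SimplexCategory.const (SimplexCategory.mk 0) m.unop k).op σ

section Widening

variable {X : SSet.{0}} {m : SimplexCategoryᵒᵖ}

lemma mem_fullSub_iff {ν : Set (X.obj V0)} {σ : X.obj m} :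
    σ ∈ (fullSub X ν).carrier m ↔ ∀ k, vertex σ k ∈ ν :=
  ⟨fun h _ => h _, fun h g => SimplexCategory.eq_const_of_zero g ▸ h _⟩

lemma mem_wideSub_iff {ν : Set (X.obj V0)} {σ : (sprod J X).obj m} :
    σ ∈ (wideSub X ν).carrier m ↔ ∀ k, σ.1 k = true → vertex σ.2 k ∈ ν :=
  mem_fullSub_iff

lemma mem_zeroSlice_iff {σ : (sprod J X).obj m} :
    σ ∈ (zeroSlice X).carrier m ↔ ∀ k, σ.1 k = false :=
  mem_fullSub_iff

lemma exists_mem_wideSub_of_directed {K : Type} [Nonempty K] {μ : K → Set (X.obj V0)}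
    (hμ : Directed (· ⊆ ·) μ) {σ : (sprod J X).obj m}
    (hσ : σ ∈ (wideSub X (⋃ k, μ k)).carrier m) : ∃ k, σ ∈ (wideSub X (μ k)).carrier m := by
  classical
  obtain ⟨k, hk⟩ := hμ.exists_mem_subset_of_finset_subset_biUnion
    (s := {i | σ.1 i = true}.toFinset.image (vertex σ.2)) (by
      simpa [Set.subset_def] using mem_wideSub_iff.1 hσ)
  exact ⟨k, mem_wideSub_iff.2 fun i hi => hk (by simpa using ⟨i, hi, rfl⟩)⟩

end Widening

section Step

variable {Y : SSet.{0}} (A : Sub Y) (ν : Set (Y.obj V0))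

def stage (μ : Set (Y.obj V0)) : Sub (sprod J Y) :=
  (widenedSub Y A ν).union (wideSub Y μ)

variable {A ν}

lemma stage_mono {μ μ' : Set (Y.obj V0)} (h : μ ⊆ μ') :
    (stage A ν μ).Le (stage A ν μ') :=
  fun m _ hσ => hσ.imp id fun hσ => wideSub_mono Y h m hσ

lemma stage_le_wideSub {μ : Set (Y.obj V0)} (h : μ ⊆ ν) : (stage A ν μ).Le (wideSub Y ν) :=
  fun m _ hσ => hσ.elim (fun hσ => widenedSub_le Y A ν m hσ) fun hσ => wideSub_mono Y h m hσ

lemma mem_wideSub_of_mem_stage {μ : Set (Y.obj V0)} {m : SimplexCategoryᵒᵖ}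
    {σ : (sprod J Y).obj m} (hσ : σ ∈ (stage A ν μ).carrier m) (hσA : σ.2 ∉ A.carrier m) :
    σ ∈ (wideSub Y μ).carrier m := by
  rcases hσ with (hσ | ⟨_, hA⟩) | hσ
  · exact zeroSlice_le_wideSub Y μ m hσ
  · exact absurd hA hσA
  · exact hσ

lemma mem_wideSub_inter_of_mem_stage {μ : Set (Y.obj V0)} (hμ : μ ⊆ ν) {m : SimplexCategoryᵒᵖ}
    {σ : (sprod J Y).obj m} (hσ : σ ∈ (stage A ν μ).carrier m) (hσA : σ.2 ∈ A.carrier m) :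
    σ ∈ (wideSub Y (ν ∩ A.carrier V0)).carrier m := by
  rcases hσ with (hσ | ⟨hσ, _⟩) | hσ
  · exact zeroSlice_le_wideSub Y _ m hσ
  · exact hσ
  · exact fun g hg => ⟨hμ (hσ g hg), A.map_mem g.op hσA⟩

variable (A ν) in
def stageVertex (μ : Set (Y.obj V0)) (v : Y.obj V0) : (stage A ν μ).toSSet.obj V0 :=
  ⟨(fun _ => false, v), Or.inl (Or.inl fun _ => rfl)⟩

def orMap {S : Sub (sprod J Y)} {m : SimplexCategoryᵒᵖ} (p : (sprod J S.toSSet).obj m) :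
    (sprod J Y).obj m :=
  (fun k => p.1 k || p.2.1.1 k, p.2.1.2)

variable {μ : Set (Y.obj V0)} {v : Y.obj V0} {m : SimplexCategoryᵒᵖ}
  {p : (sprod J (stage A ν μ).toSSet).obj m}

lemma mem_wideSub_stageVertex_iff :
    p ∈ (wideSub _ {stageVertex A ν μ v}).carrier m ↔
      ∀ k, p.1 k = true → p.2.1.1 k = false ∧ vertex p.2.1.2 k = v := by
  rw [mem_wideSub_iff]
  refine forall₂_congr fun k _ => ⟨fun h => ?_, fun ⟨ha, hy⟩ => ?_⟩
  · have h' := congrArg Subtype.val (Set.mem_singleton_iff.1 h)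
    exact ⟨congrFun (congrArg Prod.fst h') 0, congrArg Prod.snd h'⟩
  · exact Subtype.ext (Prod.ext (funext fun j => Fin.fin_one_eq_zero j ▸ ha) hy)

lemma orMap_mem_wideSub {ρ : Set (Y.obj V0)}
    (hp : p ∈ (wideSub _ {stageVertex A ν μ v}).carrier m)
    (ha : p.2.1 ∈ (wideSub Y ρ).carrier m) (hv : ∀ k, p.1 k = true → v ∈ ρ) :
    orMap p ∈ (wideSub Y ρ).carrier m := by
  refine mem_wideSub_iff.2 fun k hk => ?_
  rcases Bool.or_eq_true_iff.1 hk with hb | ha'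
  · exact (mem_wideSub_stageVertex_iff.1 hp k hb).2 ▸ hv k hb
  · exact mem_wideSub_iff.1 ha k ha'

lemma mem_widenedSub_of_mem (hp : p ∈ (wideSub _ {stageVertex A ν μ v}).carrier m)
    (hpA : p.2.1.2 ∈ A.carrier m) :
    p ∈ (widenedSub _ ((stage A ν μ).restrict A.prodJ) {stageVertex A ν μ v}).carrier m :=
  Or.inr ⟨fun g hg => ⟨hp g hg, A.map_mem g.op hpA⟩, hpA⟩

lemma orMap_mem_stage (hμ : μ ⊆ ν) (hv : v ∈ ν)
    (hp : p ∈ (widenedSub _ ((stage A ν μ).restrict A.prodJ) {stageVertex A ν μ v}).carrier m) :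
    orMap p ∈ (stage A ν μ).carrier m := by
  rcases hp with hp | ⟨hp, hpA⟩
  · have : orMap p = p.2.1 :=
      Prod.ext (funext fun k => by simp [orMap, mem_zeroSlice_iff.1 hp k]) rfl
    exact this ▸ p.2.2
  · have hp' := wideSub_mono _ Set.inter_subset_left m hp
    refine Or.inl (Or.inr ⟨orMap_mem_wideSub hp' (mem_wideSub_inter_of_mem_stage hμ p.2.2 hpA)
      fun k hk => ⟨hv, ?_⟩, hpA⟩)
    exact (mem_wideSub_stageVertex_iff.1 hp' k hk).2 ▸ A.map_mem _ hpA

lemma orMap_mem_stage_insert (hμ : μ ⊆ ν) (hv : v ∈ ν)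
    (hp : p ∈ (wideSub _ {stageVertex A ν μ v}).carrier m) :
    orMap p ∈ (stage A ν (insert v μ)).carrier m := by
  by_cases hpA : p.2.1.2 ∈ A.carrier m
  · exact stage_mono (Set.subset_insert v μ) m
      (orMap_mem_stage hμ hv (mem_widenedSub_of_mem hp hpA))
  · exact Or.inr (orMap_mem_wideSub hp (wideSub_mono Y (Set.subset_insert v μ) m
      (mem_wideSub_of_mem_stage p.2.2 hpA)) fun _ _ => Set.mem_insert v μ)

lemma mem_widenedSub_of_orMap_mem (hvμ : v ∉ μ)
    (hp : p ∈ (wideSub _ {stageVertex A ν μ v}).carrier m)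
    (h : orMap p ∈ (stage A ν μ).carrier m) :
    p ∈ (widenedSub _ ((stage A ν μ).restrict A.prodJ) {stageVertex A ν μ v}).carrier m := by
  by_cases hpA : p.2.1.2 ∈ A.carrier m
  · exact mem_widenedSub_of_mem hp hpA
  refine Or.inl (mem_zeroSlice_iff.2 fun k => ?_)
  cases hb : p.1 k
  · rfl
  · have hk := mem_wideSub_iff.1 (mem_wideSub_of_mem_stage h hpA) k (by simp [orMap, hb])
    exact absurd ((mem_wideSub_stageVertex_iff.1 hp k hb).2 ▸ hk) hvμ

def splitAt [DecidableEq (Y.obj V0)] (v : Y.obj V0) {m : SimplexCategoryᵒᵖ}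
    (x : (sprod J Y).obj m) : J.obj m × J.obj m :=
  (fun k => x.1 k && decide (vertex x.2 k = v), fun k => x.1 k && !decide (vertex x.2 k = v))

lemma splitAt_orMap [DecidableEq (Y.obj V0)] (hvμ : v ∉ μ)
    (hp : p ∈ (wideSub _ {stageVertex A ν μ v}).carrier m) (hpA : p.2.1.2 ∉ A.carrier m) :
    splitAt v (orMap p) = (p.1, p.2.1.1) := by
  have ha := mem_wideSub_iff.1 (mem_wideSub_of_mem_stage p.2.2 hpA)
  have hb := mem_wideSub_stageVertex_iff.1 hp
  have hne : ∀ k, p.2.1.1 k = true → vertex p.2.1.2 k ≠ v := fun k hk h => hvμ (h ▸ ha k hk)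
  refine Prod.ext (funext fun k => ?_) (funext fun k => ?_) <;>
  cases hbk : p.1 k <;> cases hak : p.2.1.1 k <;> simp_all [splitAt, orMap]

lemma orMap_injOn [DecidableEq (Y.obj V0)] (hvμ : v ∉ μ) {q : (sprod J (stage A ν μ).toSSet).obj m}
    (hp : p ∈ (wideSub _ {stageVertex A ν μ v}).carrier m)
    (hq : q ∈ (wideSub _ {stageVertex A ν μ v}).carrier m) (hpA : p.2.1.2 ∉ A.carrier m)
    (h : orMap p = orMap q) : p = q := by
  have hy : p.2.1.2 = q.2.1.2 := (congrArg Prod.snd h :)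
  have hs := (splitAt_orMap hvμ hp hpA).symm.trans (h ▸ splitAt_orMap hvμ hq (hy ▸ hpA))
  exact Prod.ext (congrArg Prod.fst hs :) (Subtype.ext (Prod.ext (congrArg Prod.snd hs :) hy))

lemma exists_orMap_eq [DecidableEq (Y.obj V0)] {x : (sprod J Y).obj m}
    (hx : x ∈ (stage A ν (insert v μ)).carrier m) (hxA : x ∉ (widenedSub Y A ν).carrier m) :
    ∃ p ∈ (wideSub _ {stageVertex A ν μ v}).carrier m, orMap p = x := by
  have hx' := mem_wideSub_iff.1 (hx.resolve_left hxA)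
  have ha : ((splitAt v x).2, x.2) ∈ (wideSub Y μ).carrier m := by
    refine mem_wideSub_iff.2 fun k hk => ?_
    simp only [splitAt, Bool.and_eq_true, Bool.not_eq_true', decide_eq_false_iff_not] at hk
    exact (hx' k hk.1).resolve_left hk.2
  refine ⟨((splitAt v x).1, ⟨((splitAt v x).2, x.2), Or.inr ha⟩),
    mem_wideSub_stageVertex_iff.2 fun k hk => ?_, Prod.ext (funext fun k => ?_) rfl⟩
  · simp only [splitAt, Bool.and_eq_true, decide_eq_true_eq] at hk
    simp [splitAt, hk.2]
  · by_cases hk : vertex x.2 k = v <;> simp [orMap, splitAt, hk]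

variable (A ν μ v) in
def orMapOfWidenedSub (hμ : μ ⊆ ν) (hv : v ∈ ν) :
    (widenedSub _ ((stage A ν μ).restrict A.prodJ) {stageVertex A ν μ v}).toSSet ⟶
      (stage A ν μ).toSSet where
  app _ := TypeCat.ofHom fun p => ⟨orMap p.1, orMap_mem_stage hμ hv p.2⟩
  naturality _ _ _ := rfl

variable (A ν μ v) in
def orMapOfWideSub (hμ : μ ⊆ ν) (hv : v ∈ ν) :
    (wideSub _ {stageVertex A ν μ v}).toSSet ⟶ (stage A ν (insert v μ)).toSSet where
  app _ := TypeCat.ofHom fun p => ⟨orMap p.1, orMap_mem_stage_insert hμ hv p.2⟩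
  naturality _ _ _ := rfl

theorem isPushout_stage_insert (hμ : μ ⊆ ν) (hv : v ∈ ν) (hvμ : v ∉ μ) :
    IsPushout (orMapOfWidenedSub A ν μ v hμ hv)
      (widenedIncl _ ((stage A ν μ).restrict A.prodJ) {stageVertex A ν μ v})
      (Sub.homOfLe (stage_mono (Set.subset_insert v μ))) (orMapOfWideSub A ν μ v hμ hv) := by
  classical
  refine isPushout_of_app_injective rfl (fun m => Sub.homOfLe_app_injective _ m)
    (fun m => Sub.homOfLe_app_injective _ m) ?_ ?_ ?_
  · rintro m p ⟨x, hx⟩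
    have hx' : x.1 = orMap p.1 := congrArg Subtype.val hx
    exact ⟨⟨p.1, mem_widenedSub_of_orMap_mem hvμ p.2 (hx' ▸ x.2)⟩, rfl⟩
  · intro m x hx
    obtain ⟨p, hp, hpx⟩ := exists_orMap_eq x.2 fun h => hx ⟨⟨x.1, Or.inl h⟩, rfl⟩
    exact ⟨⟨p, hp⟩, Subtype.ext hpx⟩
  · intro m p hp q _ h
    exact Subtype.ext (orMap_injOn hvμ p.2 q.2
      (fun hA => hp ⟨⟨p.1, mem_widenedSub_of_mem p.2 hA⟩, rfl⟩) (congrArg Subtype.val h))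

end Step

theorem IsSaturated.homOfLe_stage_insert_mem {T : MorphismProperty SSet.{0}} (hT : IsSaturated T)
    (hle : Wide1 ≤ T) {Y : SSet.{0}} {A : Sub Y} {ν μ μ' : Set (Y.obj V0)} {v : Y.obj V0}
    (hμ : μ ⊆ ν) (hv : v ∈ ν) (hvμ : v ∉ μ) (hμ' : μ' = insert v μ)
    (h : (stage A ν μ).Le (stage A ν μ')) : T (Sub.homOfLe h) := by
  subst hμ'
  exact hT.stableUnderCobaseChange.of_isPushout (isPushout_stage_insert hμ hv hvμ)
    (hle _ ⟨_, _, _, rfl⟩)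

section Filtration

variable {Y : SSet.{0}} (ν : Set (Y.obj V0)) [LinearOrder ν]

/-- Stage `i` of the filtration widens at the vertices of `ν` before `i`: `⊥` gives the domain of
the widened inclusion, and `⊤` is needed to reach its codomain when `ν` has a largest element. -/
def initSeg (i : WithBot (WithTop ν)) : Set (Y.obj V0) :=
  {y | ∃ h : y ∈ ν, (((⟨y, h⟩ : ν) : WithTop ν) : WithBot (WithTop ν)) < i}

lemma initSeg_mono : Monotone (initSeg ν) :=
  fun _ _ h _ ⟨hy, hlt⟩ => ⟨hy, hlt.trans_le h⟩

variable {ν}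

lemma initSeg_subset (i : WithBot (WithTop ν)) : initSeg ν i ⊆ ν :=
  fun _ ⟨hy, _⟩ => hy

lemma initSeg_bot : initSeg ν ⊥ = ∅ :=
  Set.eq_empty_of_forall_notMem fun _ ⟨_, hlt⟩ => not_lt_bot hlt

lemma initSeg_top : initSeg ν ⊤ = ν :=
  (initSeg_subset ⊤).antisymm fun _ hy => ⟨hy, WithBot.coe_lt_coe.2 (WithTop.coe_lt_top _)⟩

variable [SuccOrder (WithBot (WithTop ν))]

lemma initSeg_succ_bot : initSeg ν (Order.succ ⊥) = ∅ := by
  refine Set.eq_empty_of_forall_notMem fun y ⟨hy, hlt⟩ => ?_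
  rw [Order.lt_succ_iff_of_not_isMax (not_isMax_of_lt (WithBot.bot_lt_coe ⊤)), le_bot_iff] at hlt
  exact WithBot.coe_ne_bot hlt

lemma initSeg_succ_coe (v : ν) :
    initSeg ν (Order.succ ((v : WithTop ν) : WithBot (WithTop ν))) =
      insert v.1 (initSeg ν ((v : WithTop ν) : WithBot (WithTop ν))) := by
  have hv : ¬IsMax ((v : WithTop ν) : WithBot (WithTop ν)) :=
    not_isMax_of_lt (WithBot.coe_lt_coe.2 (WithTop.coe_lt_top v))
  ext y
  simp only [initSeg, Set.mem_ofPred_eq, Set.mem_insert_iff, Order.lt_succ_iff_of_not_isMax hv]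
  constructor
  · rintro ⟨hy, hle⟩
    rcases hle.lt_or_eq with hlt | heq
    · exact Or.inr ⟨hy, hlt⟩
    · exact Or.inl (congrArg Subtype.val (WithTop.coe_injective (WithBot.coe_injective heq)))
  · rintro (rfl | ⟨hy, hlt⟩)
    · exact ⟨v.2, le_rfl⟩
    · exact ⟨hy, hlt.le⟩

lemma initSeg_subset_iUnion {i : WithBot (WithTop ν)} (hi : Order.IsSuccLimit i) :
    initSeg ν i ⊆ ⋃ j : Set.Iio i, initSeg ν j :=
  fun _ ⟨hy, hlt⟩ => Set.mem_iUnion.2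
    ⟨⟨_, hi.succ_lt hlt⟩, hy, Order.lt_succ_of_not_isMax hlt.not_isMax⟩

variable (A : Sub Y)

lemma exists_lt_mem_stage_initSeg {i : WithBot (WithTop ν)} (hi : Order.IsSuccLimit i)
    {m : SimplexCategoryᵒᵖ} {σ : (sprod J Y).obj m}
    (hσ : σ ∈ (stage A ν (initSeg ν i)).carrier m) :
    ∃ j < i, σ ∈ (stage A ν (initSeg ν j)).carrier m := by
  rcases hσ with hσ | hσ
  · exact ⟨⊥, hi.bot_lt, Or.inl hσ⟩
  · have : Nonempty (Set.Iio i) := ⟨⟨⊥, hi.bot_lt⟩⟩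
    obtain ⟨⟨j, hj⟩, hσj⟩ := exists_mem_wideSub_of_directed
      ((initSeg_mono ν).comp (Subtype.mono_coe _)).directed_le
      (wideSub_mono Y (initSeg_subset_iUnion hi) m hσ)
    exact ⟨j, hj, Or.inr hσj⟩

theorem IsSaturated.homOfLe_stage_initSeg_succ_mem {T : MorphismProperty SSet.{0}}
    (hT : IsSaturated T) (hle : Wide1 ≤ T) (i : WithBot (WithTop ν)) (hi : ¬IsMax i) :
    T (Sub.homOfLe (stage_mono (A := A) (ν := ν) (initSeg_mono ν (Order.le_succ i)))) := by
  induction i using WithBot.recBotCoe with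
  | bot =>
    exact hT.homOfLe_mem_of_le _ (stage_mono (by rw [initSeg_succ_bot, initSeg_bot]))
  | coe j =>
    induction j using WithTop.recTopCoe with
    | top => exact absurd isMax_top hi
    | coe v =>
      exact hT.homOfLe_stage_insert_mem hle (initSeg_subset _) v.2
        (fun ⟨_, hlt⟩ => hlt.false) (initSeg_succ_coe v) _

end Filtration

theorem IsSaturated.widenedIncl_mem {T : MorphismProperty SSet.{0}} (hT : IsSaturated T)
    (hle : Wide1 ≤ T) {Y : SSet.{0}} (A : Sub Y) (ν : Set (Y.obj V0)) [LinearOrder ν]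
    [WellFoundedLT ν] : T (widenedIncl Y A ν) := by
  let := SuccOrder.ofLinearWellFoundedLT (WithBot (WithTop ν))
  have hbot : (widenedSub Y A ν).Le (stage A ν (initSeg ν ⊥)) := fun _ _ h => Or.inl h
  have hbot' : (stage A ν (initSeg ν ⊥)).Le (widenedSub Y A ν) := fun m σ hσ =>
    hσ.elim id fun hσ => Or.inl (mem_zeroSlice_iff.2 fun k => by
      simpa [initSeg_bot] using mt (mem_wideSub_iff.1 hσ k))
  have hfil := hT.homOfLe_bot_mem (fun i => stage A ν (initSeg ν i))
    (fun _ _ h => stage_mono (initSeg_mono ν h))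
    (hT.homOfLe_stage_initSeg_succ_mem A hle)
    (fun _ hi _ _ hσ => exists_lt_mem_stage_initSeg A hi hσ)
    (fun i => stage_le_wideSub (initSeg_subset i))
    (fun m _ hσ => ⟨⊤, Or.inr (wideSub_mono Y initSeg_top.ge m hσ)⟩)
  have := hT.respectsIso
  have := Sub.isIso_homOfLe hbot hbot'
  exact (T.cancel_left_of_respectsIso (Sub.homOfLe hbot) _).2 hfil

/-- The class `Wide` of all widened inclusions is contained in the
saturated closure of the class `Wide^(1)` of inclusions widened at a single vertex. -/
theorem Wide_le_satClosure_Wide1 : Wide ≤ satClosure Wide1 := by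
  rintro _ _ f ⟨Y, A, ν, hf⟩ T hT hle
  obtain ⟨_, _⟩ := exists_wellFoundedLT ν
  have := hT.respectsIso
  exact (T.arrow_mk_iso_iff (eqToIso hf)).2 (hT.widenedIncl_mem hle A ν)

end Paper
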